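/- Assume the PACA setting with the Slater condition, and suppose the PACA sequence (xᵏ) is infinite (xᵏ ∉ C for all k). Then (xᵏ) converges R-linearly to some point x* ∈ C: there exists x* with fᵢ(x*) ≤ 0 for all i such that xᵏ → x* and limsup_{k→∞} ‖xᵏ − x*‖^{1/k} < 1. -/

import Mathlib

/-!
For every `z` in the tightened set `Sₖ = {z | ∀ i, fᵢ z + εₖ ≤ 0}` the subgradient inequality gives
`‖vᵢᵏ‖² ≤ ⟪vᵢᵏ, xᵏ - z⟫`, and this makes the extrapolated step Fejér monotone:
`‖xᵏ⁺¹ - z‖² + ‖xᵏ⁺¹ - xᵏ‖² ≤ ‖xᵏ - z‖²`. As the `Sₖ` increase, `dₖ = dist(xᵏ, Sₖ)` satisfies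
`dₖ₊₁² + ‖xᵏ⁺¹ - xᵏ‖² ≤ dₖ²`. Once `εₖ` is below the Slater margin, convexity along the segment
towards the Slater point bounds `dₖ` by a multiple of `max 0 (maxᵢ fᵢ(xᵏ) + εₖ)`, and the step
length is bounded below by a multiple of the same quantity because the subgradients stay bounded
on the bounded iterates. Hence `dₖ² ≤ κ ‖xᵏ⁺¹ - xᵏ‖²`, so `dₖ` and the steps decay geometrically
and `xᵏ` converges R-linearly to a point of `closure (⋃ₖ Sₖ) ⊆ C`.
-/

open Filter Metric Set Topology
open scoped RealInnerProductSpace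

theorem limsup_rpow_one_div_le_of_le_geometric {a : ℕ → ℝ} {B r : ℝ} (ha : ∀ k, 0 ≤ a k)
    (hB : 0 < B) (hr : 0 ≤ r) (h : ∀ᶠ k in atTop, a k ≤ B * r ^ k) :
    limsup (fun k => a k ^ (1 / (k : ℝ))) atTop ≤ r := by
  have hlim : Tendsto (fun k : ℕ => B ^ (1 / (k : ℝ)) * r) atTop (𝓝 r) := by
    simpa using ((Real.continuousAt_const_rpow hB.ne').tendsto.comp
      tendsto_one_div_atTop_nhds_zero_nat).mul_const r
  calc limsup (fun k => a k ^ (1 / (k : ℝ))) atTop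
      ≤ limsup (fun k : ℕ => B ^ (1 / (k : ℝ)) * r) atTop := by
        refine limsup_le_limsup ?_ (isCoboundedUnder_le_of_le atTop fun k =>
          Real.rpow_nonneg (ha k) _) hlim.isBoundedUnder_le
        filter_upwards [h, eventually_ne_atTop 0] with k hk hk0
        calc a k ^ (1 / (k : ℝ)) ≤ (B * r ^ k) ^ (1 / (k : ℝ)) :=
              Real.rpow_le_rpow (ha k) hk (by positivity)
          _ = B ^ (1 / (k : ℝ)) * r := by
              rw [Real.mul_rpow hB.le (pow_nonneg hr k), one_div, Real.pow_rpow_inv_natCast hr hk0]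
    _ = r := hlim.limsup_eq

theorem limsup_rpow_one_div_lt_one {a : ℕ → ℝ} {C q : ℝ} {K : ℕ} (ha : ∀ k, 0 ≤ a k)
    (hq₀ : 0 ≤ q) (hq : q < 1) (h : ∀ j, a (K + j) ≤ C * q ^ j) :
    limsup (fun k => a k ^ (1 / (k : ℝ))) atTop < 1 := by
  set r := (1 + q) / 2 with hr_def
  have hr : 0 < r := by positivity
  have hqr : q ≤ r := by linarith
  refine (limsup_rpow_one_div_le_of_le_geometric ha (B := max C 1 / r ^ K) (by positivity) hr.le
    ?_).trans_lt (by linarith)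
  filter_upwards [eventually_ge_atTop K] with k hk
  obtain ⟨j, rfl⟩ := Nat.exists_eq_add_of_le hk
  calc a (K + j) ≤ C * q ^ j := h j
    _ ≤ max C 1 * r ^ j := by gcongr; exact le_max_left _ _
    _ = max C 1 / r ^ K * r ^ (K + j) := by rw [pow_add]; field_simp

section Fejer

variable {E : Type*} [MetricSpace E]

theorem infDist_sq_add_le_of_forall_mem [ProperSpace E] {s t : Set E} {a b : E} {r : ℝ}
    (hst : s ⊆ t) (hs : IsClosed s) (hne : s.Nonempty)
    (h : ∀ z ∈ s, dist b z ^ 2 + r ≤ dist a z ^ 2) :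
    infDist b t ^ 2 + r ≤ infDist a s ^ 2 := by
  obtain ⟨z, hz, hza⟩ := hs.exists_infDist_eq_dist hne a
  have hbz : infDist b t ≤ dist b z :=
    (infDist_le_infDist_of_subset hst hne).trans (infDist_le_dist_of_mem hz)
  rw [hza]
  nlinarith [h z hz, pow_le_pow_left₀ infDist_nonneg hbz 2]

theorem le_sqrt_div_mul_of_sq_add_sq_le {a b s κ : ℝ} (hb : 0 ≤ b) (hκ : 0 ≤ κ)
    (h₁ : a ^ 2 + s ^ 2 ≤ b ^ 2) (h₂ : b ^ 2 ≤ κ * s ^ 2) : a ≤ √(κ / (κ + 1)) * b := by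
  rw [← Real.sqrt_sq hb, ← Real.sqrt_mul (by positivity)]
  refine Real.le_sqrt_of_sq_le ?_
  rw [div_mul_eq_mul_div, le_div_iff₀ (by positivity)]
  nlinarith

theorem exists_tendsto_le_geometric_of_fejer [ProperSpace E] {S : ℕ → Set E} {x : ℕ → E} {κ : ℝ}
    (hmono : Monotone S) (hclosed : ∀ k, IsClosed (S k)) (hne : (S 0).Nonempty)
    (hfejer : ∀ k, ∀ z ∈ S k,
      dist (x (k + 1)) z ^ 2 + dist (x k) (x (k + 1)) ^ 2 ≤ dist (x k) z ^ 2)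
    (hκ : 0 ≤ κ) (herr : ∀ k, infDist (x k) (S k) ^ 2 ≤ κ * dist (x k) (x (k + 1)) ^ 2) :
    ∃ y ∈ closure (⋃ k, S k), Tendsto x atTop (𝓝 y) ∧
      ∃ C q : ℝ, 0 ≤ q ∧ q < 1 ∧ ∀ k, dist (x k) y ≤ C * q ^ k := by
  set D : ℕ → ℝ := fun k => infDist (x k) (S k)
  set q := √(κ / (κ + 1))
  have hne' (k : ℕ) : (S k).Nonempty := hne.mono (hmono k.zero_le)
  have hdec (k : ℕ) : D (k + 1) ^ 2 + dist (x k) (x (k + 1)) ^ 2 ≤ D k ^ 2 :=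
    infDist_sq_add_le_of_forall_mem (hmono k.le_succ) (hclosed k) (hne' k) (hfejer k)
  have hq : q < 1 := by
    rw [Real.sqrt_lt' one_pos, one_pow, div_lt_one (by linarith)]
    linarith
  have hD (k : ℕ) : D k ≤ q ^ k * D 0 := le_geom (Real.sqrt_nonneg _) k fun j _ =>
    le_sqrt_div_mul_of_sq_add_sq_le infDist_nonneg hκ (hdec j) (herr j)
  have hstep (k : ℕ) : dist (x k) (x (k + 1)) ≤ D 0 * q ^ k :=
    (le_of_sq_le_sq (by linarith [hdec k, sq_nonneg (D (k + 1))]) infDist_nonneg).trans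
      ((hD k).trans_eq (mul_comm _ _))
  obtain ⟨y, hy⟩ := cauchySeq_tendsto_of_complete (cauchySeq_of_le_geometric q (D 0) hq hstep)
  refine ⟨y, ?_, hy, D 0 / (1 - q), q, Real.sqrt_nonneg _, hq, fun k => ?_⟩
  · choose z hzS hz using fun k => (hclosed k).exists_infDist_eq_dist (hne' k) (x k)
    have hgeom : Tendsto (fun k => q ^ k * D 0) atTop (𝓝 0) := by
      simpa using (tendsto_pow_atTop_nhds_zero_of_lt_one (Real.sqrt_nonneg _) hq).mul_const (D 0)
    have hz_lim : Tendsto z atTop (𝓝 y) :=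
      hy.congr_dist <|
        squeeze_zero (fun _ => dist_nonneg) (fun k => (hz k).symm.trans_le (hD k)) hgeom
    exact mem_closure_of_tendsto hz_lim (Eventually.of_forall fun k => mem_iUnion.2 ⟨k, hzS k⟩)
  · rw [div_mul_eq_mul_div]
    exact dist_le_of_le_geometric_of_tendsto q (D 0) hq hstep hy k

theorem exists_tendsto_limsup_lt_one_of_fejer [ProperSpace E] {S : ℕ → Set E} {x : ℕ → E}
    {κ : ℝ} {K : ℕ} (hmono : Monotone S) (hclosed : ∀ k, IsClosed (S k)) (hne : (S K).Nonempty)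
    (hfejer : ∀ k ≥ K, ∀ z ∈ S k,
      dist (x (k + 1)) z ^ 2 + dist (x k) (x (k + 1)) ^ 2 ≤ dist (x k) z ^ 2)
    (hκ : 0 ≤ κ) (herr : ∀ k ≥ K, infDist (x k) (S k) ^ 2 ≤ κ * dist (x k) (x (k + 1)) ^ 2) :
    ∃ y ∈ closure (⋃ k, S k), Tendsto x atTop (𝓝 y) ∧
      limsup (fun k => dist (x k) y ^ (1 / (k : ℝ))) atTop < 1 := by
  obtain ⟨y, hyS, hy, C, q, hq₀, hq, hdist⟩ :=
    exists_tendsto_le_geometric_of_fejer (S := fun j => S (K + j)) (x := fun j => x (K + j))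
      (fun i j hij => hmono (by omega)) (fun j => hclosed _) (by simpa using hne)
      (fun j => hfejer (K + j) (by omega)) hκ (fun j => herr (K + j) (by omega))
  refine ⟨y, closure_mono (iUnion_subset fun j => subset_iUnion S (K + j)) hyS, ?_,
    limsup_rpow_one_div_lt_one (fun k => dist_nonneg) hq₀ hq hdist⟩
  exact (tendsto_add_atTop_iff_nat K).1 (by simpa only [add_comm] using hy)

end Fejer

section Tightened

variable {E ι : Type*}

def tightenedSet (f : ι → E → ℝ) (e : ℝ) : Set E := {z | ∀ i, f i z + e ≤ 0}

theorem tightenedSet_anti {f : ι → E → ℝ} : Antitone (tightenedSet f) :=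
  fun _ _ he _ hz i => by linarith [hz i]

theorem isClosed_tightenedSet [TopologicalSpace E] {f : ι → E → ℝ} (hf : ∀ i, Continuous (f i))
    (e : ℝ) : IsClosed (tightenedSet f e) := by
  simp only [tightenedSet, ofPred_forall]
  exact isClosed_iInter fun i => isClosed_le ((hf i).add continuous_const) continuous_const

theorem infDist_tightenedSet_le [NormedAddCommGroup E] [NormedSpace ℝ E] {f : ι → E → ℝ}
    (hf : ∀ i, ConvexOn ℝ univ (f i)) {x x₀ : E} {δ e g : ℝ} (hx₀ : x₀ ∈ tightenedSet f δ)
    (he : e < δ) (hg : ∀ i, f i x ≤ g) :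
    infDist x (tightenedSet f e) ≤ max 0 (g + e) / (δ - e) * dist x x₀ := by
  rcases le_or_gt (g + e) 0 with hge | hge
  · rw [infDist_zero_of_mem (show x ∈ tightenedSet f e from fun i => by linarith [hg i])]
    exact mul_nonneg (div_nonneg (le_max_left _ _) (sub_nonneg.2 he.le)) dist_nonneg
  set θ := (g + e) / (δ + g) with hθ
  have hδg : 0 < δ + g := by linarith
  have hθ₀ : 0 ≤ θ := by positivity
  have hθ₁ : θ ≤ 1 := div_le_one_of_le₀ (by linarith) hδg.le
  have hmem : AffineMap.lineMap x x₀ θ ∈ tightenedSet f e := fun i => by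
    have hconv := (hf i).2 (mem_univ x) (mem_univ x₀) (sub_nonneg.2 hθ₁) hθ₀ (sub_add_cancel 1 θ)
    have hweights : (1 - θ) * g + θ * (-δ) = -e := by rw [hθ]; field_simp; ring
    simp only [smul_eq_mul] at hconv
    rw [AffineMap.lineMap_apply_module]
    linarith [mul_le_mul_of_nonneg_left (hg i) (sub_nonneg.2 hθ₁),
      mul_le_mul_of_nonneg_left (by linarith [hx₀ i] : f i x₀ ≤ -δ) hθ₀]
  calc infDist x (tightenedSet f e) ≤ dist x (AffineMap.lineMap x x₀ θ) :=
        infDist_le_dist_of_mem hmem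
    _ = θ * dist x x₀ := by rw [dist_left_lineMap, Real.norm_of_nonneg hθ₀]
    _ ≤ max 0 (g + e) / (δ - e) * dist x x₀ := by
        rw [hθ, max_eq_right hge.le]
        gcongr
        linarith

end Tightened

section InnerProduct

variable {E : Type*} [NormedAddCommGroup E] [InnerProductSpace ℝ E]

theorem norm_sq_le_inner_of_le_inner {a : ℝ} {u y : E} (h : a ≤ ⟪u, y⟫) :
    ‖(max 0 a / ‖u‖ ^ 2) • u‖ ^ 2 ≤ ⟪(max 0 a / ‖u‖ ^ 2) • u, y⟫ := by
  rcases le_or_gt a 0 with ha | ha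
  · simp [max_eq_left ha]
  rcases eq_or_ne u 0 with rfl | hu
  · simp
  have hu' : ‖u‖ ≠ 0 := norm_ne_zero_iff.2 hu
  rw [max_eq_right ha.le, norm_smul, mul_pow, real_inner_smul_left, Real.norm_eq_abs, sq_abs]
  calc (a / ‖u‖ ^ 2) ^ 2 * ‖u‖ ^ 2 = a / ‖u‖ ^ 2 * a := by field_simp
    _ ≤ a / ‖u‖ ^ 2 * ⟪u, y⟫ := by gcongr

theorem max_zero_eq_norm_smul_mul_norm {a : ℝ} {u : E} (hu : 0 < a → u ≠ 0) :
    max 0 a = ‖(max 0 a / ‖u‖ ^ 2) • u‖ * ‖u‖ := by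
  rcases le_or_gt a 0 with ha | ha
  · simp [max_eq_left ha]
  have hu' : ‖u‖ ≠ 0 := norm_ne_zero_iff.2 (hu ha)
  rw [max_eq_right ha.le, norm_smul, Real.norm_of_nonneg (by positivity)]
  field_simp

theorem norm_sub_smul_sq_add_norm_smul_sq_le {s : ℝ} {w y : E} (hs : 0 ≤ s) (h : s ≤ ⟪w, y⟫) :
    ‖y - (s / ‖w‖ ^ 2) • w‖ ^ 2 + ‖(s / ‖w‖ ^ 2) • w‖ ^ 2 ≤ ‖y‖ ^ 2 := by
  rcases eq_or_ne w 0 with rfl | hw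
  · simp
  have hw' : ‖w‖ ≠ 0 := norm_ne_zero_iff.2 hw
  have hα : (s / ‖w‖ ^ 2) ^ 2 * ‖w‖ ^ 2 = s / ‖w‖ ^ 2 * s := by field_simp
  rw [norm_sub_sq_real, real_inner_smul_right, norm_smul, mul_pow, Real.norm_eq_abs, sq_abs,
    real_inner_comm, hα]
  linarith [mul_le_mul_of_nonneg_left h (by positivity : 0 ≤ s / ‖w‖ ^ 2)]

theorem le_norm_smul_sq_of_le_inner {s : ℝ} {w y : E} (hw : ‖w‖ ^ 2 ≤ s) (h : s ≤ ⟪w, y⟫) :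
    s ≤ ‖(s / ‖w‖ ^ 2) • w‖ ^ 2 := by
  rcases eq_or_ne w 0 with rfl | hw₀
  · simpa using h
  have hw' : 0 < ‖w‖ ^ 2 := by positivity
  have hnorm : ‖(s / ‖w‖ ^ 2) • w‖ ^ 2 = s * (s / ‖w‖ ^ 2) := by
    rw [norm_smul, mul_pow, Real.norm_eq_abs, sq_abs]
    field_simp
  rw [hnorm]
  exact le_mul_of_one_le_right (hw'.le.trans hw) ((one_le_div hw').2 hw)

theorem norm_inv_card_smul_sum_sq_le {ι : Type*} [Fintype ι] (v : ι → E) :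
    ‖(Fintype.card ι : ℝ)⁻¹ • ∑ i, v i‖ ^ 2 ≤ (Fintype.card ι : ℝ)⁻¹ * ∑ i, ‖v i‖ ^ 2 := by
  rcases isEmpty_or_nonempty ι with hι | hι
  · simp
  have hcard : (0 : ℝ) < Fintype.card ι := by exact_mod_cast Fintype.card_pos
  rw [norm_smul, mul_pow, Real.norm_of_nonneg (by positivity)]
  calc (Fintype.card ι : ℝ)⁻¹ ^ 2 * ‖∑ i, v i‖ ^ 2
      ≤ (Fintype.card ι : ℝ)⁻¹ ^ 2 * (Fintype.card ι * ∑ i, ‖v i‖ ^ 2) := by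
        gcongr
        exact (pow_le_pow_left₀ (norm_nonneg _) (norm_sum_le _ _) 2).trans
          (by simpa using sq_sum_le_card_mul_sum_sq (s := Finset.univ) (f := fun i => ‖v i‖))
    _ = (Fintype.card ι : ℝ)⁻¹ * ∑ i, ‖v i‖ ^ 2 := by field_simp

theorem norm_le_two_mul_of_subgradient {f : E → ℝ} {x u : E} {M : ℝ}
    (hsub : ∀ z, f x + ⟪u, z - x⟫ ≤ f z) (hM : ∀ z ∈ closedBall x 1, |f z| ≤ M) :
    ‖u‖ ≤ 2 * M := by
  have hx := abs_le.1 (hM x (mem_closedBall_self zero_le_one))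
  rcases eq_or_ne u 0 with rfl | hu
  · simp only [norm_zero]; linarith
  have hu' : ‖u‖ ≠ 0 := norm_ne_zero_iff.2 hu
  have hz : x + ‖u‖⁻¹ • u ∈ closedBall x 1 := by
    simp [norm_smul, hu']
  have h := hsub (x + ‖u‖⁻¹ • u)
  rw [add_sub_cancel_left, real_inner_smul_right, real_inner_self_eq_norm_sq, sq,
    inv_mul_cancel_left₀ hu'] at h
  linarith [abs_le.1 (hM _ hz)]

end InnerProduct

theorem continuous_of_convexOn_univ {E : Type*} [NormedAddCommGroup E] [NormedSpace ℝ E]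
    [FiniteDimensional ℝ E] {g : E → ℝ} (hg : ConvexOn ℝ univ g) : Continuous g :=
  continuousOn_univ.1 (hg.continuousOn isOpen_univ)

variable {E ι : Type*} [NormedAddCommGroup E] [InnerProductSpace ℝ E] [Fintype ι]

/-- `x_succ` merges the two cases of the PACA update: when `w k = 0` the step
`(… / ‖w k‖ ^ 2) • w k` is `0`. -/
structure IsPACA (f : ι → E → ℝ) (ε : ℕ → ℝ) (x : ℕ → E) (u v : ι → ℕ → E) (w : ℕ → E) :
    Prop where
  subgradient : ∀ i k z, f i (x k) + ⟪u i k, z - x k⟫ ≤ f i z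
  ne_zero : ∀ i k, 0 < f i (x k) + ε k → u i k ≠ 0
  v_eq : ∀ i k, v i k = (max 0 (f i (x k) + ε k) / ‖u i k‖ ^ 2) • u i k
  w_eq : ∀ k, w k = (Fintype.card ι : ℝ)⁻¹ • ∑ i, v i k
  x_succ : ∀ k,
    x (k + 1) = x k - (((Fintype.card ι : ℝ)⁻¹ * ∑ i, ‖v i k‖ ^ 2) / ‖w k‖ ^ 2) • w k

namespace IsPACA

variable {f : ι → E → ℝ} {ε : ℕ → ℝ} {x : ℕ → E} {u v : ι → ℕ → E} {w : ℕ → E}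

theorem norm_sq_le_inner (hP : IsPACA f ε x u v w) {k : ℕ} {z : E}
    (hz : z ∈ tightenedSet f (ε k)) (i : ι) : ‖v i k‖ ^ 2 ≤ ⟪v i k, x k - z⟫ := by
  rw [hP.v_eq]
  refine norm_sq_le_inner_of_le_inner ?_
  rw [← neg_sub z, inner_neg_right]
  linarith [hP.subgradient i k z, hz i]

theorem mean_le_inner (hP : IsPACA f ε x u v w) {k : ℕ} {z : E}
    (hz : z ∈ tightenedSet f (ε k)) :
    (Fintype.card ι : ℝ)⁻¹ * ∑ i, ‖v i k‖ ^ 2 ≤ ⟪w k, x k - z⟫ := by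
  rw [hP.w_eq, real_inner_smul_left, sum_inner]
  gcongr with i
  exact hP.norm_sq_le_inner hz i

theorem mean_le_dist_succ_sq (hP : IsPACA f ε x u v w) {k : ℕ} {z : E}
    (hz : z ∈ tightenedSet f (ε k)) :
    (Fintype.card ι : ℝ)⁻¹ * ∑ i, ‖v i k‖ ^ 2 ≤ dist (x k) (x (k + 1)) ^ 2 := by
  rw [dist_eq_norm, hP.x_succ, sub_sub_cancel]
  refine le_norm_smul_sq_of_le_inner ?_ (hP.mean_le_inner hz)
  rw [hP.w_eq]
  exact norm_inv_card_smul_sum_sq_le _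

theorem fejer (hP : IsPACA f ε x u v w) {k : ℕ} {z : E} (hz : z ∈ tightenedSet f (ε k)) :
    dist (x (k + 1)) z ^ 2 + dist (x k) (x (k + 1)) ^ 2 ≤ dist (x k) z ^ 2 := by
  have h := norm_sub_smul_sq_add_norm_smul_sq_le (by positivity) (hP.mean_le_inner hz)
  rwa [dist_eq_norm, dist_eq_norm, dist_eq_norm, hP.x_succ, sub_sub_cancel, sub_right_comm]

theorem max_zero_sq_le (hP : IsPACA f ε x u v w) {k : ℕ} {z : E}
    (hz : z ∈ tightenedSet f (ε k)) (i : ι) :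
    max 0 (f i (x k) + ε k) ^ 2 ≤
      Fintype.card ι * ‖u i k‖ ^ 2 * dist (x k) (x (k + 1)) ^ 2 := by
  have hcard : (Fintype.card ι : ℝ) ≠ 0 := by
    have : Nonempty ι := ⟨i⟩
    exact_mod_cast Fintype.card_ne_zero
  have hv : ‖v i k‖ ^ 2 ≤ Fintype.card ι * ((Fintype.card ι : ℝ)⁻¹ * ∑ j, ‖v j k‖ ^ 2) := by
    rw [mul_inv_cancel_left₀ hcard]
    exact Finset.single_le_sum (fun j _ => sq_nonneg ‖v j k‖) (Finset.mem_univ i)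
  calc max 0 (f i (x k) + ε k) ^ 2 = ‖v i k‖ ^ 2 * ‖u i k‖ ^ 2 := by
        rw [hP.v_eq, ← mul_pow, ← max_zero_eq_norm_smul_mul_norm (hP.ne_zero i k)]
    _ ≤ Fintype.card ι * dist (x k) (x (k + 1)) ^ 2 * ‖u i k‖ ^ 2 := by
        gcongr
        exact hv.trans (by gcongr; exact hP.mean_le_dist_succ_sq hz)
    _ = _ := by ring

theorem dist_le_dist_of_forall_mem (hP : IsPACA f ε x u v w) {z : E} {K : ℕ}
    (hz : ∀ k ≥ K, z ∈ tightenedSet f (ε k)) : ∀ k ≥ K, dist (x k) z ≤ dist (x K) z := by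
  intro k hk
  induction k, hk using Nat.le_induction with
  | base => exact le_rfl
  | succ k hk ih =>
    refine (le_of_sq_le_sq ?_ dist_nonneg).trans ih
    linarith [hP.fejer (hz k hk), sq_nonneg (dist (x k) (x (k + 1)))]

theorem exists_norm_subgradient_le [ProperSpace E] (hP : IsPACA f ε x u v w)
    (hf : ∀ i, Continuous (f i)) {c : E} {R : ℝ} {K : ℕ} (hx : ∀ k ≥ K, dist (x k) c ≤ R) :
    ∃ L, ∀ i, ∀ k ≥ K, ‖u i k‖ ≤ L := by
  obtain ⟨M, hM⟩ := (isCompact_closedBall c (R + 1)).exists_bound_of_continuousOn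
    (continuous_pi hf).continuousOn
  refine ⟨2 * M, fun i k hk => norm_le_two_mul_of_subgradient (hP.subgradient i k) fun z hz => ?_⟩
  have hzc : z ∈ closedBall c (R + 1) := by
    rw [mem_closedBall] at hz ⊢
    linarith [dist_triangle z (x k) c, hx k hk]
  exact (norm_le_pi_norm (fun j => f j z) i).trans (hM z hzc)

theorem exists_infDist_sq_le [FiniteDimensional ℝ E] [Nonempty ι] (hP : IsPACA f ε x u v w)
    (hf : ∀ i, ConvexOn ℝ univ (f i)) (hε : Antitone ε) {x₀ : E} {δ : ℝ} {K : ℕ}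
    (hx₀ : x₀ ∈ tightenedSet f δ) (hK : ε K < δ) :
    ∃ κ, 0 ≤ κ ∧ ∀ k ≥ K,
      infDist (x k) (tightenedSet f (ε k)) ^ 2 ≤ κ * dist (x k) (x (k + 1)) ^ 2 := by
  have hx₀k : ∀ k ≥ K, x₀ ∈ tightenedSet f (ε k) := fun k hk =>
    tightenedSet_anti ((hε hk).trans hK.le) hx₀
  have hR := hP.dist_le_dist_of_forall_mem hx₀k
  obtain ⟨L, hL⟩ := hP.exists_norm_subgradient_le (fun i => continuous_of_convexOn_univ (hf i)) hR
  refine ⟨Fintype.card ι * L ^ 2 * (dist (x K) x₀ / (δ - ε K)) ^ 2, by positivity,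
    fun k hk => ?_⟩
  obtain ⟨i, hi⟩ := Finite.exists_max fun i => f i (x k)
  have hbound : infDist (x k) (tightenedSet f (ε k)) ≤
      max 0 (f i (x k) + ε k) * (dist (x K) x₀ / (δ - ε K)) := by
    refine (infDist_tightenedSet_le hf hx₀ ((hε hk).trans_lt hK) hi).trans ?_
    rw [div_mul_eq_mul_div, mul_div_assoc]
    gcongr
    · exact hR k hk
    · exact hε hk
  calc infDist (x k) (tightenedSet f (ε k)) ^ 2
      ≤ max 0 (f i (x k) + ε k) ^ 2 * (dist (x K) x₀ / (δ - ε K)) ^ 2 := by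
        rw [← mul_pow]; exact pow_le_pow_left₀ infDist_nonneg hbound 2
    _ ≤ Fintype.card ι * ‖u i k‖ ^ 2 * dist (x k) (x (k + 1)) ^ 2 *
          (dist (x K) x₀ / (δ - ε K)) ^ 2 := by
        gcongr; exact hP.max_zero_sq_le (hx₀k k hk) i
    _ ≤ Fintype.card ι * L ^ 2 * dist (x k) (x (k + 1)) ^ 2 *
          (dist (x K) x₀ / (δ - ε K)) ^ 2 := by
        gcongr; exact hL i k hk
    _ = _ := by ring

end IsPACA

theorem stmt_17_general {n m : ℕ} (hm : 0 < m)
    (f : Fin m → EuclideanSpace ℝ (Fin n) → ℝ)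
    (hconv : ∀ i, ConvexOn ℝ Set.univ (f i))
    (xhat : EuclideanSpace ℝ (Fin n)) (hslater : ∀ i, f i xhat < 0)
    (ε : ℕ → ℝ) (hεpos : ∀ k, 0 < ε k) (hεanti : StrictAnti ε)
    (hεlim : Tendsto ε atTop (nhds 0))
    (x : ℕ → EuclideanSpace ℝ (Fin n))
    (u v : Fin m → ℕ → EuclideanSpace ℝ (Fin n))
    (w : ℕ → EuclideanSpace ℝ (Fin n))
    (hsub : ∀ i k, ∀ z, f i (x k) + ⟪u i k, z - x k⟫ ≤ f i z)
    (hune : ∀ i k, 0 < f i (x k) + ε k → u i k ≠ 0)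
    (hv : ∀ i k, v i k = (max 0 (f i (x k) + ε k) / ‖u i k‖ ^ 2) • u i k)
    (hw : ∀ k, w k = (m : ℝ)⁻¹ • ∑ i, v i k)
    (hstep0 : ∀ k, w k = 0 → x (k + 1) = x k)
    (hstep : ∀ k, w k ≠ 0 →
      x (k + 1) = x k - (((m : ℝ)⁻¹ * ∑ i, ‖v i k‖ ^ 2) / ‖w k‖ ^ 2) • w k) :
    ∃ xstar : EuclideanSpace ℝ (Fin n),
      (∀ i, f i xstar ≤ 0) ∧ Tendsto x atTop (nhds xstar) ∧
        limsup (fun k => ‖x k - xstar‖ ^ (1 / (k : ℝ))) atTop < 1 := by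
  have : Nonempty (Fin m) := ⟨⟨0, hm⟩⟩
  have hP : IsPACA f ε x u v w :=
    { subgradient := hsub, ne_zero := hune, v_eq := hv
      w_eq := by simpa only [Fintype.card_fin] using hw
      x_succ := fun k => by
        simp only [Fintype.card_fin]
        by_cases h : w k = 0
        · rw [h, smul_zero, sub_zero, hstep0 k h]
        · exact hstep k h }
  have hclosed (e : ℝ) : IsClosed (tightenedSet f e) :=
    isClosed_tightenedSet (fun i => continuous_of_convexOn_univ (hconv i)) e
  obtain ⟨i₀, hi₀⟩ := Finite.exists_max fun i => f i xhat
  have hxhat : xhat ∈ tightenedSet f (-f i₀ xhat) := fun i => by linarith [hi₀ i]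
  obtain ⟨K, hK⟩ := (hεlim.eventually_lt_const (neg_pos.2 (hslater i₀))).exists
  obtain ⟨κ, hκ, herr⟩ := hP.exists_infDist_sq_le hconv hεanti.antitone hxhat hK
  obtain ⟨xstar, hxstar, hlim, hrate⟩ := exists_tendsto_limsup_lt_one_of_fejer
    (S := fun k => tightenedSet f (ε k)) (tightenedSet_anti.comp hεanti.antitone)
    (fun k => hclosed _) ⟨xhat, tightenedSet_anti hK.le hxhat⟩ (fun k _ z hz => hP.fejer hz)
    hκ herr
  have hC : closure (⋃ k, tightenedSet f (ε k)) ⊆ tightenedSet f 0 :=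
    closure_minimal (iUnion_subset fun k => tightenedSet_anti (hεpos k).le) (hclosed 0)
  refine ⟨xstar, fun i => by simpa using hC hxstar i, hlim, ?_⟩
  simpa only [dist_eq_norm] using hrate

theorem stmt_17 {n m : ℕ} (hm : 0 < m)
    (f : Fin m → EuclideanSpace ℝ (Fin n) → ℝ)
    (hconv : ∀ i, ConvexOn ℝ Set.univ (f i))
    (xhat : EuclideanSpace ℝ (Fin n)) (hslater : ∀ i, f i xhat < 0)
    (ε : ℕ → ℝ) (hεpos : ∀ k, 0 < ε k) (hεanti : StrictAnti ε)
    (hεlim : Tendsto ε atTop (nhds 0))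
    (x : ℕ → EuclideanSpace ℝ (Fin n))
    (u v : Fin m → ℕ → EuclideanSpace ℝ (Fin n))
    (w : ℕ → EuclideanSpace ℝ (Fin n))
    (hsub : ∀ i k, ∀ z, f i (x k) + ⟪u i k, z - x k⟫ ≤ f i z)
    (hune : ∀ i k, 0 < f i (x k) + ε k → u i k ≠ 0)
    (hv : ∀ i k, v i k = (max 0 (f i (x k) + ε k) / ‖u i k‖ ^ 2) • u i k)
    (hw : ∀ k, w k = (m : ℝ)⁻¹ • ∑ i, v i k)
    (hstep0 : ∀ k, w k = 0 → x (k + 1) = x k)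
    (hstep : ∀ k, w k ≠ 0 →
      x (k + 1) = x k - (((m : ℝ)⁻¹ * ∑ i, ‖v i k‖ ^ 2) / ‖w k‖ ^ 2) • w k)
    (hinfinite : ∀ k, ∃ i, 0 < f i (x k)) :
    ∃ xstar : EuclideanSpace ℝ (Fin n),
      (∀ i, f i xstar ≤ 0) ∧ Tendsto x atTop (nhds xstar) ∧
        limsup (fun k => ‖x k - xstar‖ ^ (1 / (k : ℝ))) atTop < 1 :=
  stmt_17_general hm f hconv xhat hslater ε hεpos hεanti hεlim x u v w hsub hune hv hw hstep0 hstep
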